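/- arXiv:2104.04997 — 5 statements merged into one kernel-verified Lean document; each statement's English description precedes it below -/
import Mathlib

section
/- Let $\mu_0,\mu_1 \ge 0$ with $\mu_0+\mu_1=1$, and let $f:\{0,1\}\to\mathbb{R}_{>0}$. Then $\mu_0 f(0)\log f(0) + \mu_1 f(1)\log f(1) \le (\mu_0 f(0)+\mu_1 f(1))\log(\mu_0 f(0)+\mu_1 f(1)) + \mu_0\mu_1 (f(1)-f(0))(\log f(1)-\log f(0))$. -/
/-!
Under a two-point probability measure, `E[f g] = E[f] E[g] + μ₀ μ₁ (f 1 - f 0) (g 1 - g 0)`.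
Taking `g = log f` rewrites the left-hand side as `E[f] E[log f]` plus the correction term, and
Jensen's inequality for the concave logarithm gives `E[f] E[log f] ≤ E[f] log E[f]`.
-/

open Real Set

lemma two_point_mean_mul_eq {μ₀ μ₁ : ℝ} (hsum : μ₀ + μ₁ = 1) (a b c d : ℝ) :
    μ₀ * (a * c) + μ₁ * (b * d) =
      (μ₀ * a + μ₁ * b) * (μ₀ * c + μ₁ * d) + μ₀ * μ₁ * (b - a) * (d - c) := by
  obtain rfl : μ₁ = 1 - μ₀ := by linarith
  ring

lemma two_point_mean_log_le_log_mean {μ₀ μ₁ a b : ℝ} (hμ₀ : 0 ≤ μ₀) (hμ₁ : 0 ≤ μ₁)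
    (hsum : μ₀ + μ₁ = 1) (ha : 0 < a) (hb : 0 < b) :
    μ₀ * log a + μ₁ * log b ≤ log (μ₀ * a + μ₁ * b) :=
  strictConcaveOn_log_Ioi.concaveOn.2 (mem_Ioi.2 ha) (mem_Ioi.2 hb) hμ₀ hμ₁ hsum

theorem two_point_log_sobolev (μ₀ μ₁ : ℝ) (hμ₀ : 0 ≤ μ₀) (hμ₁ : 0 ≤ μ₁)
    (hsum : μ₀ + μ₁ = 1) (f : Fin 2 → ℝ) (hf : ∀ x, 0 < f x) :
    μ₀ * f 0 * Real.log (f 0) + μ₁ * f 1 * Real.log (f 1) ≤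
      (μ₀ * f 0 + μ₁ * f 1) * Real.log (μ₀ * f 0 + μ₁ * f 1) +
        μ₀ * μ₁ * (f 1 - f 0) * (Real.log (f 1) - Real.log (f 0)) := by
  have hmean : 0 < μ₀ * f 0 + μ₁ * f 1 :=
    convex_Ioi (0 : ℝ) (hf 0) (hf 1) hμ₀ hμ₁ hsum
  calc μ₀ * f 0 * log (f 0) + μ₁ * f 1 * log (f 1)
      = (μ₀ * f 0 + μ₁ * f 1) * (μ₀ * log (f 0) + μ₁ * log (f 1)) +
          μ₀ * μ₁ * (f 1 - f 0) * (log (f 1) - log (f 0)) := by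
        rw [← two_point_mean_mul_eq hsum]; ring
    _ ≤ (μ₀ * f 0 + μ₁ * f 1) * log (μ₀ * f 0 + μ₁ * f 1) +
          μ₀ * μ₁ * (f 1 - f 0) * (log (f 1) - log (f 0)) := by
        gcongr
        exact two_point_mean_log_le_log_mean hμ₀ hμ₁ hsum (hf 0) (hf 1)
end

section
/- For every $N \ge 1$, every $\alpha$ with $0 < \alpha \le N$, and every $f:\{0,\ldots,N\}\to\mathbb{R}_{>0}$, letting $\pi_{\alpha,N}(n) = \binom{N}{n}(\alpha/N)^n(1-\alpha/N)^{N-n}$ be the binomial distribution, one has $\sum_{n=0}^N f(n)\log f(n)\,\pi_{\alpha,N}(n) \le \big(\sum_{n=0}^N f(n)\pi_{\alpha,N}(n)\big)\log\big(\sum_{n=0}^N f(n)\pi_{\alpha,N}(n)\big) + \sum_{n=1}^N n\,(f(n)-f(n-1))(\log f(n)-\log f(n-1))\,\pi_{\alpha,N}(n)$. -/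
/-!
Binomial(N + 1, p) is the law of `S + ε` with `S ~ Binomial(N, p)` and `ε ~ Bernoulli(p)`
independent. Conditioning on `S` and applying the two-point inequality bounds the entropy of `f`
by the entropy of `g s = (1 - p) f s + p f (s + 1)` under Binomial(N, p) plus `p (1 - p) E`, where
`E` is the mean of `ψ(f (S + 1), f S)` and `ψ(a, b) = (a - b)(log a - log b)`. The induction
hypothesis handles `g`. Joint convexity of `ψ`, together with the identity
`n (1 - p) π_N(n) = (N - n + 1) p π_N(n - 1)`, bounds the Dirichlet form of `g` by `N p E`, while
the Dirichlet form of `f` under Binomial(N + 1, p) equals `(N + 1) p E`; and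
`p (1 - p) + N p ≤ (N + 1) p`.
-/

open Finset

lemma sub_mul_log_sub_nonneg {a b : ℝ} (ha : 0 < a) (hb : 0 < b) :
    0 ≤ (a - b) * (Real.log a - Real.log b) :=
  (monotoneOn_id.monovaryOn Real.strictMonoOn_log.monotoneOn).sub_mul_sub_nonneg hb ha

lemma convexOn_sub_one_mul_log : ConvexOn ℝ (Set.Ioi 0) fun u : ℝ ↦ (u - 1) * Real.log u := by
  have h : (fun u : ℝ ↦ (u - 1) * Real.log u) =
      (fun u ↦ u * Real.log u) + fun u ↦ -Real.log u := by
    funext u; simp only [Pi.add_apply]; ring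
  rw [h]
  exact (Real.convexOn_mul_log.subset Set.Ioi_subset_Ici_self (convex_Ioi 0)).add
    strictConcaveOn_log_Ioi.concaveOn.neg

lemma mul_sub_one_mul_log_div {x y : ℝ} (hx : 0 < x) (hy : 0 < y) :
    y * ((x / y - 1) * Real.log (x / y)) = (x - y) * (Real.log x - Real.log y) := by
  rw [Real.log_div hx.ne' hy.ne']
  field_simp

/-- `(x, y) ↦ (x - y)(log x - log y)` is the perspective of the convex `u ↦ (u - 1) log u`. -/
lemma convexOn_sub_mul_log_sub : ConvexOn ℝ (Set.Ioi 0 ×ˢ Set.Ioi 0)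
    fun x : ℝ × ℝ ↦ (x.1 - x.2) * (Real.log x.1 - Real.log x.2) := by
  refine ⟨(convex_Ioi 0).prod (convex_Ioi 0), ?_⟩
  rintro ⟨a, c⟩ ⟨ha, hc⟩ ⟨b, d⟩ ⟨hb, hd⟩ s t hs ht hst
  simp only [Set.mem_Ioi] at ha hb hc hd
  simp only [Prod.smul_mk, Prod.mk_add_mk, smul_eq_mul]
  set X := s * a + t * b
  set Y := s * c + t * d
  have hX : 0 < X := (convex_Ioi (0 : ℝ)) ha hb hs ht hst
  have hY : 0 < Y := (convex_Ioi (0 : ℝ)) hc hd hs ht hst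
  have hweights : s * c / Y + t * d / Y = 1 := by rw [← add_div, div_self hY.ne']
  have hpoint : (s * c / Y) * (a / c) + (t * d / Y) * (b / d) = X / Y := by
    field_simp
    rfl
  have hφ := convexOn_sub_one_mul_log.2 (div_pos ha hc) (div_pos hb hd)
    (by positivity : 0 ≤ s * c / Y) (by positivity : 0 ≤ t * d / Y) hweights
  simp only [smul_eq_mul, hpoint] at hφ
  calc (X - Y) * (Real.log X - Real.log Y) = Y * ((X / Y - 1) * Real.log (X / Y)) :=
        (mul_sub_one_mul_log_div hX hY).symm
    _ ≤ Y * (s * c / Y * ((a / c - 1) * Real.log (a / c)) +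
          t * d / Y * ((b / d - 1) * Real.log (b / d))) :=
        mul_le_mul_of_nonneg_left hφ hY.le
    _ = s * (c * ((a / c - 1) * Real.log (a / c))) +
          t * (d * ((b / d - 1) * Real.log (b / d))) := by
        field_simp
    _ = s * ((a - c) * (Real.log a - Real.log c)) + t * ((b - d) * (Real.log b - Real.log d)) := by
        rw [mul_sub_one_mul_log_div ha hc, mul_sub_one_mul_log_div hb hd]

lemma two_point_modified_log_sobolev {p a b : ℝ} (hp0 : 0 ≤ p) (hp1 : p ≤ 1)
    (ha : 0 < a) (hb : 0 < b) :
    (1 - p) * (a * Real.log a) + p * (b * Real.log b) ≤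
      ((1 - p) * a + p * b) * Real.log ((1 - p) * a + p * b) +
        p * (1 - p) * ((b - a) * (Real.log b - Real.log a)) := by
  have hq : 0 ≤ 1 - p := sub_nonneg.2 hp1
  set L := Real.log ((1 - p) * a + p * b)
  have hL : (1 - p) * Real.log a + p * Real.log b ≤ L := by
    simpa only [smul_eq_mul] using
      strictConcaveOn_log_Ioi.concaveOn.2 ha hb hq hp0 (sub_add_cancel 1 p)
  have ha' : (1 - p) * a * (Real.log a - L) ≤ (1 - p) * a * (p * (Real.log a - Real.log b)) :=
    mul_le_mul_of_nonneg_left (by linarith) (by positivity)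
  have hb' : p * b * (Real.log b - L) ≤ p * b * ((1 - p) * (Real.log b - Real.log a)) :=
    mul_le_mul_of_nonneg_left (by linarith) (by positivity)
  linear_combination ha' + hb'

noncomputable def binomialWeight (p : ℝ) (N n : ℕ) : ℝ :=
  N.choose n * p ^ n * (1 - p) ^ (N - n)

namespace binomialWeight

variable {p : ℝ} {N n : ℕ}

lemma nonneg (hp0 : 0 ≤ p) (hp1 : p ≤ 1) : 0 ≤ binomialWeight p N n := by
  have : 0 ≤ 1 - p := sub_nonneg.2 hp1
  unfold binomialWeight
  positivity

lemma of_lt (h : N < n) : binomialWeight p N n = 0 := by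
  simp [binomialWeight, Nat.choose_eq_zero_of_lt h]

lemma succ_zero : binomialWeight p (N + 1) 0 = (1 - p) * binomialWeight p N 0 := by
  simp [binomialWeight, pow_succ, mul_comm]

/-- One more Bernoulli(p) trial either succeeds or fails. -/
lemma succ_succ : binomialWeight p (N + 1) (n + 1) =
    p * binomialWeight p N n + (1 - p) * binomialWeight p N (n + 1) := by
  have h : (N.choose (n + 1) : ℝ) * (1 - p) ^ (N - n) =
      (1 - p) * (N.choose (n + 1) * (1 - p) ^ (N - (n + 1))) := by
    rcases lt_or_ge n N with h | h
    · rw [show N - n = N - (n + 1) + 1 by omega, pow_succ]; ring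
    · simp [Nat.choose_eq_zero_of_lt (Nat.lt_succ_of_le h)]
  simp only [binomialWeight, Nat.choose_succ_succ, Nat.cast_add, Nat.succ_sub_succ]
  linear_combination p ^ (n + 1) * h

lemma succ_mul_succ_succ :
    (n + 1) * binomialWeight p (N + 1) (n + 1) = (N + 1) * p * binomialWeight p N n := by
  have h : ((N + 1) * N.choose n : ℝ) = (N + 1).choose (n + 1) * (n + 1) := by
    exact_mod_cast Nat.add_one_mul_choose_eq N n
  simp only [binomialWeight, Nat.succ_sub_succ]
  linear_combination (p ^ (n + 1) * (1 - p) ^ (N - n)) * h.symm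

lemma succ_mul_one_sub_mul_succ (h : n < N) :
    (n + 1) * (1 - p) * binomialWeight p N (n + 1) = (N - n) * p * binomialWeight p N n := by
  have h' : (N.choose (n + 1) * (n + 1) : ℝ) = N.choose n * (N - n) := by
    rw [← Nat.cast_sub h.le]
    exact_mod_cast Nat.choose_succ_right_eq N n
  simp only [binomialWeight]
  rw [show N - n = N - (n + 1) + 1 by omega]
  linear_combination (p ^ (n + 1) * (1 - p) ^ (N - (n + 1) + 1)) * h'

lemma sum_mul_succ (h : ℕ → ℝ) :
    ∑ n ∈ range (N + 2), h n * binomialWeight p (N + 1) n =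
      ∑ n ∈ range (N + 1), ((1 - p) * h n + p * h (n + 1)) * binomialWeight p N n := by
  have hshift : ∑ n ∈ range (N + 1), h n * binomialWeight p N n =
      ∑ n ∈ range (N + 1), h (n + 1) * binomialWeight p N (n + 1) +
        h 0 * binomialWeight p N 0 := by
    rw [← sum_range_succ' (fun n ↦ h n * binomialWeight p N n), sum_range_succ _ (N + 1),
      of_lt (Nat.lt_succ_self N), mul_zero, add_zero]
  have hsucc (n : ℕ) : h (n + 1) * binomialWeight p (N + 1) (n + 1) =
      p * (h (n + 1) * binomialWeight p N n) +
        (1 - p) * (h (n + 1) * binomialWeight p N (n + 1)) := by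
    rw [succ_succ]; ring
  have hmix (n : ℕ) : ((1 - p) * h n + p * h (n + 1)) * binomialWeight p N n =
      (1 - p) * (h n * binomialWeight p N n) + p * (h (n + 1) * binomialWeight p N n) := by
    ring
  rw [sum_range_succ', succ_zero]
  simp only [hsucc, hmix, sum_add_distrib, ← mul_sum, hshift]
  ring

lemma sum_succ_mul_mix (u : ℕ → ℝ) :
    ∑ n ∈ range N, (n + 1) * ((1 - p) * u n + p * u (n + 1)) * binomialWeight p N (n + 1) =
      N * p * ∑ n ∈ range (N + 1), u n * binomialWeight p N n := by
  have hleft : ∑ n ∈ range N, (n + 1) * (1 - p) * binomialWeight p N (n + 1) * u n =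
      ∑ n ∈ range (N + 1), (N - n) * p * binomialWeight p N n * u n := by
    rw [sum_range_succ, sub_self, zero_mul, zero_mul, zero_mul, add_zero]
    exact sum_congr rfl fun n hn ↦ by rw [succ_mul_one_sub_mul_succ (mem_range.1 hn)]
  have hright :
      ∑ n ∈ range N, ((n + 1 : ℕ) : ℝ) * p * binomialWeight p N (n + 1) * u (n + 1) =
      ∑ n ∈ range (N + 1), n * p * binomialWeight p N n * u n := by
    rw [sum_range_succ' _ N, Nat.cast_zero, zero_mul, zero_mul, zero_mul, add_zero]
  calc _ = ∑ n ∈ range N, (n + 1) * (1 - p) * binomialWeight p N (n + 1) * u n +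
        ∑ n ∈ range N, ((n + 1 : ℕ) : ℝ) * p * binomialWeight p N (n + 1) * u (n + 1) := by
        rw [← sum_add_distrib]
        exact sum_congr rfl fun n _ ↦ by push_cast; ring
    _ = _ := by
        rw [hleft, hright, ← sum_add_distrib, mul_sum]
        exact sum_congr rfl fun n _ ↦ by ring

end binomialWeight

noncomputable def dirichletForm (p : ℝ) (N : ℕ) (f : ℕ → ℝ) : ℝ :=
  ∑ n ∈ Icc 1 N, (n : ℝ) * (f n - f (n - 1)) * (Real.log (f n) - Real.log (f (n - 1))) *
    binomialWeight p N n

noncomputable def jumpEnergy (p : ℝ) (N : ℕ) (f : ℕ → ℝ) : ℝ :=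
  ∑ n ∈ range (N + 1),
    (f (n + 1) - f n) * (Real.log (f (n + 1)) - Real.log (f n)) * binomialWeight p N n

section dirichletForm

variable {p : ℝ} {N : ℕ} {f : ℕ → ℝ}

lemma jumpEnergy_nonneg (hp0 : 0 ≤ p) (hp1 : p ≤ 1) (hf : ∀ n ≤ N + 1, 0 < f n) :
    0 ≤ jumpEnergy p N f :=
  sum_nonneg fun n hn ↦ by
    have hn := mem_range.1 hn
    exact mul_nonneg (sub_mul_log_sub_nonneg (hf _ (by omega)) (hf _ (by omega)))
      (binomialWeight.nonneg hp0 hp1)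

lemma dirichletForm_eq_sum_range : dirichletForm p N f = ∑ n ∈ range N, (n + 1) *
    ((f (n + 1) - f n) * (Real.log (f (n + 1)) - Real.log (f n))) * binomialWeight p N (n + 1) := by
  rw [dirichletForm, ← Ico_add_one_right_eq_Icc, sum_Ico_eq_sum_range, Nat.add_sub_cancel]
  refine sum_congr rfl fun n _ ↦ ?_
  rw [add_comm 1 n, Nat.add_sub_cancel]
  push_cast
  ring

lemma dirichletForm_succ : dirichletForm p (N + 1) f = (N + 1) * p * jumpEnergy p N f := by
  rw [dirichletForm_eq_sum_range, jumpEnergy, mul_sum]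
  refine sum_congr rfl fun n _ ↦ ?_
  linear_combination ((f (n + 1) - f n) * (Real.log (f (n + 1)) - Real.log (f n))) *
    binomialWeight.succ_mul_succ_succ (p := p) (N := N) (n := n)

lemma dirichletForm_mix_le (hp0 : 0 ≤ p) (hp1 : p ≤ 1) (hf : ∀ n ≤ N + 1, 0 < f n) :
    dirichletForm p N (fun n ↦ (1 - p) * f n + p * f (n + 1)) ≤ N * p * jumpEnergy p N f := by
  rw [dirichletForm_eq_sum_range, jumpEnergy, ← binomialWeight.sum_succ_mul_mix]
  refine sum_le_sum fun n hn ↦ ?_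
  have hn := mem_range.1 hn
  have hconv := convexOn_sub_mul_log_sub.2 (x := (f (n + 1), f n)) (y := (f (n + 2), f (n + 1)))
    ⟨hf _ (by omega), hf _ (by omega)⟩ ⟨hf _ (by omega), hf _ (by omega)⟩
    (sub_nonneg.2 hp1) hp0 (sub_add_cancel 1 p)
  simp only [Prod.smul_mk, Prod.mk_add_mk, smul_eq_mul] at hconv
  gcongr
  exact binomialWeight.nonneg hp0 hp1

end dirichletForm

theorem binomialWeight_modified_log_sobolev {p : ℝ} (hp0 : 0 ≤ p) (hp1 : p ≤ 1) (N : ℕ)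
    (f : ℕ → ℝ) (hf : ∀ n ≤ N, 0 < f n) :
    ∑ n ∈ range (N + 1), f n * Real.log (f n) * binomialWeight p N n ≤
      (∑ n ∈ range (N + 1), f n * binomialWeight p N n) *
          Real.log (∑ n ∈ range (N + 1), f n * binomialWeight p N n) + dirichletForm p N f := by
  induction N generalizing f with
  | zero => simp [dirichletForm, binomialWeight]
  | succ N ih =>
    set g := fun n ↦ (1 - p) * f n + p * f (n + 1)
    have hent : ∑ n ∈ range (N + 2), f n * Real.log (f n) * binomialWeight p (N + 1) n ≤
        ∑ n ∈ range (N + 1), g n * Real.log (g n) * binomialWeight p N n +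
          p * (1 - p) * jumpEnergy p N f := by
      rw [binomialWeight.sum_mul_succ (fun n ↦ f n * Real.log (f n)), jumpEnergy, mul_sum,
        ← sum_add_distrib]
      refine sum_le_sum fun n hn ↦ ?_
      have hn := mem_range.1 hn
      have h2 := two_point_modified_log_sobolev hp0 hp1 (hf n (by omega)) (hf (n + 1) (by omega))
      have hB := binomialWeight.nonneg (N := N) (n := n) hp0 hp1
      linear_combination mul_le_mul_of_nonneg_right h2 hB
    have hg := ih g fun n hn ↦ (convex_Ioi (0 : ℝ)) (hf n (by omega)) (hf (n + 1) (by omega))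
      (sub_nonneg.2 hp1) hp0 (sub_add_cancel 1 p)
    have hdir := dirichletForm_mix_le hp0 hp1 hf
    rw [binomialWeight.sum_mul_succ f, dirichletForm_succ]
    linear_combination hent + hg + hdir + mul_nonneg (sq_nonneg p) (jumpEnergy_nonneg hp0 hp1 hf)

theorem binomial_modified_log_sobolev_general (N : ℕ) (α : ℝ)
    (hα : 0 < α) (hαN : α ≤ N) (f : ℕ → ℝ) (hf : ∀ n ≤ N, 0 < f n)
    (π : ℕ → ℝ)
    (hπ : ∀ n, π n = (N.choose n : ℝ) * (α / N) ^ n * (1 - α / N) ^ (N - n)) :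
    ∑ n ∈ Finset.range (N + 1), f n * Real.log (f n) * π n ≤
      (∑ n ∈ Finset.range (N + 1), f n * π n) *
          Real.log (∑ n ∈ Finset.range (N + 1), f n * π n) +
        ∑ n ∈ Finset.Icc 1 N,
          (n : ℝ) * (f n - f (n - 1)) * (Real.log (f n) - Real.log (f (n - 1))) * π n := by
  obtain rfl : π = binomialWeight (α / N) N := funext hπ
  have hN : (0 : ℝ) < N := hα.trans_le hαN
  exact binomialWeight_modified_log_sobolev (div_nonneg hα.le hN.le)
    ((div_le_one hN).2 hαN) N f hf

theorem binomial_modified_log_sobolev (N : ℕ) (hN : 1 ≤ N) (α : ℝ)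
    (hα : 0 < α) (hαN : α ≤ N) (f : ℕ → ℝ) (hf : ∀ n ≤ N, 0 < f n)
    (π : ℕ → ℝ)
    (hπ : ∀ n, π n = (N.choose n : ℝ) * (α / N) ^ n * (1 - α / N) ^ (N - n)) :
    ∑ n ∈ Finset.range (N + 1), f n * Real.log (f n) * π n ≤
      (∑ n ∈ Finset.range (N + 1), f n * π n) *
          Real.log (∑ n ∈ Finset.range (N + 1), f n * π n) +
        ∑ n ∈ Finset.Icc 1 N,
          (n : ℝ) * (f n - f (n - 1)) * (Real.log (f n) - Real.log (f (n - 1))) * π n :=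
  binomial_modified_log_sobolev_general N α hα hαN f hf π hπ
end

section
/- Let $\tau_n = \frac{1}{4^n}\binom{2n}{n}$ and $\sigma_{n,k}^2 = \tau_n\tau_k\tau_{n-k}$. Then for every $n \ge 2$, $A_{2n} := (1 - 2\tau_n)^2 + 2\sum_{k=1}^{\lfloor n/2 \rfloor} \sigma_{n,k}^2 \le 2$. -/
/-!
With `τ k = C(2k, k) / 4 ^ k`, the convolution identity `∑_{k ≤ n} τ k τ (n - k) = 1` bounds the
sum of the `σ²` by `τ n`, and its two end terms give `τ n ≤ 1/2` for `n ≥ 1`; then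
`(1 - 2τ)² + 2τ ≤ 2` on `[0, 1/2]`. The identity `∑ C(2i, i) C(2j, j) = 4 ^ n` over `i + j = n`
follows by induction from `(k + 1) C(2k+2, k+1) = 2 (2k + 1) C(2k, k)`, after weighting the sum by
`i`, which by symmetry multiplies it by `n / 2`.
-/

open Finset

namespace Nat

theorem two_mul_sum_antidiagonal_fst_mul {R : Type*} [CommSemiring R] (f : ℕ × ℕ → R)
    (hf : ∀ p, f p.swap = f p) (n : ℕ) :
    2 * ∑ p ∈ antidiagonal n, (p.1 : R) * f p = n * ∑ p ∈ antidiagonal n, f p := by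
  calc 2 * ∑ p ∈ antidiagonal n, (p.1 : R) * f p
      = ∑ p ∈ antidiagonal n, (p.1 : R) * f p + ∑ p ∈ antidiagonal n, (p.2 : R) * f p := by
        rw [two_mul, ← Finset.Nat.sum_antidiagonal_swap (f := fun p => (p.1 : R) * f p)]
        simp only [Prod.fst_swap, hf]
    _ = ∑ p ∈ antidiagonal n, (n : R) * f p := by
        rw [← sum_add_distrib]
        refine sum_congr rfl fun p hp => ?_
        rw [← (mem_antidiagonal.mp hp), cast_add]
        ring
    _ = n * ∑ p ∈ antidiagonal n, f p := (mul_sum _ _ _).symm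

theorem sum_antidiagonal_centralBinom_mul (n : ℕ) :
    ∑ p ∈ antidiagonal n, p.1.centralBinom * p.2.centralBinom = 4 ^ n := by
  set S : ℕ → ℕ := fun n => ∑ p ∈ antidiagonal n, p.1.centralBinom * p.2.centralBinom
  have symm (n : ℕ) : 2 * ∑ p ∈ antidiagonal n, p.1 * (p.1.centralBinom * p.2.centralBinom)
      = n * S n := by
    simpa using two_mul_sum_antidiagonal_fst_mul (R := ℕ)
      (fun p => p.1.centralBinom * p.2.centralBinom) (fun p => mul_comm _ _) n
  have step (n : ℕ) : (n + 1) * S (n + 1) = (n + 1) * (4 * S n) :=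
    calc (n + 1) * S (n + 1)
        = 2 * ∑ p ∈ antidiagonal n, (p.1 + 1) * (p.1 + 1).centralBinom * p.2.centralBinom := by
          rw [← symm, Finset.Nat.sum_antidiagonal_succ]
          simp only [zero_mul, zero_add, mul_assoc]
      _ = 4 * (2 * ∑ p ∈ antidiagonal n, p.1 * (p.1.centralBinom * p.2.centralBinom) + S n) := by
          simp only [succ_mul_centralBinom_succ, S, mul_sum, ← sum_add_distrib]
          exact sum_congr rfl fun p _ => by ring
      _ = (n + 1) * (4 * S n) := by rw [symm]; ring
  induction n with
  | zero => rfl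
  | succ n ih =>
    change S n = 4 ^ n at ih
    change S (n + 1) = 4 ^ (n + 1)
    rw [Nat.eq_of_mul_eq_mul_left n.succ_pos (step n), ih, pow_succ, mul_comm]

theorem two_mul_centralBinom_le_four_pow {n : ℕ} (hn : n ≠ 0) : 2 * n.centralBinom ≤ 4 ^ n := by
  rw [← sum_antidiagonal_centralBinom_mul]
  have hsub : {(0, n), (n, 0)} ⊆ antidiagonal n := by simp [insert_subset_iff]
  calc 2 * n.centralBinom = ∑ p ∈ {(0, n), (n, 0)}, p.1.centralBinom * p.2.centralBinom := by
        rw [sum_pair (by simpa [eq_comm] using hn)]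
        simp [centralBinom_zero, two_mul]
    _ ≤ _ := sum_le_sum_of_subset hsub

end Nat

theorem sum_range_centralBinom_div_four_pow_mul (n : ℕ) :
    ∑ k ∈ range (n + 1), ((k.centralBinom : ℝ) / 4 ^ k) *
      ((n - k).centralBinom / 4 ^ (n - k)) = 1 := by
  rw [← Finset.Nat.sum_antidiagonal_eq_sum_range_succ
    (fun i j => ((i.centralBinom : ℝ) / 4 ^ i) * (j.centralBinom / 4 ^ j))]
  have hterm : ∀ p ∈ antidiagonal n, ((p.1.centralBinom : ℝ) / 4 ^ p.1) *
      (p.2.centralBinom / 4 ^ p.2) = ((p.1.centralBinom * p.2.centralBinom : ℕ) : ℝ) / 4 ^ n := by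
    intro p hp
    rw [← mem_antidiagonal.mp hp, pow_add]
    push_cast
    ring
  rw [sum_congr rfl hterm, ← sum_div, ← Nat.cast_sum, Nat.sum_antidiagonal_centralBinom_mul]
  push_cast
  exact div_self (by positivity)

theorem A_two_n_le_two (τ : ℕ → ℝ)
    (hτ : ∀ m, τ m = (1 / 4 ^ m) * ((2 * m).choose m : ℝ))
    (σsq : ℕ → ℕ → ℝ) (hσ : ∀ n k, σsq n k = τ n * τ k * τ (n - k)) :
    ∀ n : ℕ, 2 ≤ n →
      (1 - 2 * τ n) ^ 2 + 2 * ∑ k ∈ Finset.Icc 1 (n / 2), σsq n k ≤ 2 := by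
  intro n hn
  have hτ' (m : ℕ) : τ m = m.centralBinom / 4 ^ m := by
    rw [hτ, Nat.centralBinom_eq_two_mul_choose]; ring
  have hτ_nonneg (m : ℕ) : 0 ≤ τ m := by rw [hτ']; positivity
  have hτ_le_half : 2 * τ n ≤ 1 := by
    rw [hτ', mul_div_assoc', div_le_one (by positivity)]
    exact_mod_cast Nat.two_mul_centralBinom_le_four_pow (by omega)
  have hconv : ∑ k ∈ Icc 1 (n / 2), τ k * τ (n - k) ≤ 1 := by
    rw [← sum_range_centralBinom_div_four_pow_mul n]
    simp only [← hτ']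
    refine sum_le_sum_of_subset_of_nonneg (fun k hk => ?_) fun k _ _ => ?_
    · simp only [mem_Icc, mem_range] at hk ⊢
      omega
    · exact mul_nonneg (hτ_nonneg k) (hτ_nonneg (n - k))
  have hσsum : ∑ k ∈ Icc 1 (n / 2), σsq n k = τ n * ∑ k ∈ Icc 1 (n / 2), τ k * τ (n - k) := by
    simp only [hσ, mul_sum, mul_assoc]
  rw [hσsum]
  nlinarith [mul_le_mul_of_nonneg_left hconv (hτ_nonneg n), hτ_nonneg n]
end

section
/- For any $\alpha > 0$ there exists $N_0$ such that for all $N \ge N_0$ and all integers $n$ with $\alpha < n \le N$, the binomial probability satisfies $\binom{N}{n}(\alpha/N)^n(1-\alpha/N)^{N-n} \le 4\, e^{-\alpha}\frac{\alpha^n}{n!}$. -/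
/-!
Writing `N.choose n * (α / N) ^ n = α ^ n / n! * ∏_{i<n} (1 - i / N)` and bounding every factor
`1 - t` by `exp (-t)`, the binomial probability is at most `α ^ n / n!` times
`exp (-(∑_{i<n} i + (N - n) α) / N)`. Since `∑_{i<n} i = n (n - 1) / 2`, completing the square in `n`
shows that this exponent is at most `-α + (α + 1/2)² / (2N)`, so for `N ≥ (α + 1/2)²` the binomial
probability exceeds the Poisson one by a factor of at most `exp (1/2) ≤ 4`.
-/

open Finset Real
open scoped Nat

theorem Nat.cast_descFactorial_eq_pow_mul_prod {K : Type*} [Field K] {N : ℕ} (hN : (N : K) ≠ 0)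
    (n : ℕ) : (N.descFactorial n : K) = (N : K) ^ n * ∏ i ∈ range n, (1 - (i : K) / N) := by
  induction n with
  | zero => simp
  | succ k ih =>
    have hstep : (N : K) * (1 - (k : K) / N) = N - k := by field_simp
    rw [Nat.descFactorial_succ, Nat.cast_mul, prod_range_succ, pow_succ, mul_mul_mul_comm, ← ih,
      hstep, mul_comm]
    rcases le_or_gt k N with hkN | hNk
    · rw [Nat.cast_sub hkN]
    · simp [Nat.descFactorial_eq_zero_iff_lt.mpr hNk]

theorem Nat.cast_choose_mul_div_pow {K : Type*} [Field K] [CharZero K] {N : ℕ} (hN : N ≠ 0)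
    (n : ℕ) (x : K) :
    (N.choose n : K) * (x / N) ^ n = x ^ n / n ! * ∏ i ∈ range n, (1 - (i : K) / N) := by
  have hNK : (N : K) ≠ 0 := Nat.cast_ne_zero.mpr hN
  have hfac : (n ! : K) ≠ 0 := Nat.cast_ne_zero.mpr n.factorial_ne_zero
  rw [← mul_div_cancel_left₀ (∏ i ∈ range n, (1 - (i : K) / N)) (pow_ne_zero n hNK),
    ← Nat.cast_descFactorial_eq_pow_mul_prod hNK, Nat.descFactorial_eq_factorial_mul_choose,
    Nat.cast_mul, div_pow]
  field_simp

theorem Real.prod_one_sub_le_exp_neg_sum {ι : Type*} (s : Finset ι) {f : ι → ℝ}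
    (hf : ∀ i ∈ s, f i ≤ 1) : ∏ i ∈ s, (1 - f i) ≤ exp (-∑ i ∈ s, f i) := by
  rw [← sum_neg_distrib, exp_sum]
  exact prod_le_prod (fun i hi => sub_nonneg.mpr (hf i hi)) fun i _ => one_sub_le_exp_neg (f i)

theorem mul_sub_sq_div_two_le_sum_range (α : ℝ) (n : ℕ) :
    α * n - (α + 1 / 2) ^ 2 / 2 ≤ ∑ i ∈ range n, (i : ℝ) := by
  have hgauss : (∑ i ∈ range n, (i : ℝ)) * 2 = n * (n - 1) := by
    induction n with
    | zero => simp
    | succ k ih => rw [sum_range_succ, add_mul, ih]; push_cast; ring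
  nlinarith [sq_nonneg ((n : ℝ) - (α + 1 / 2))]

theorem binomial_le_exp_mul_poisson {α : ℝ} (hα : 0 ≤ α) {N n : ℕ} (hN : N ≠ 0) (hnN : n ≤ N)
    (hαN : α ≤ N) :
    (N.choose n : ℝ) * (α / N) ^ n * (1 - α / N) ^ (N - n) ≤
      exp ((α + 1 / 2) ^ 2 / (2 * N)) * (exp (-α) * α ^ n / n !) := by
  have hNpos : (0 : ℝ) < N := Nat.cast_pos.mpr (Nat.pos_of_ne_zero hN)
  have hfrac_le_one : ∀ i ∈ range n, (i : ℝ) / N ≤ 1 := fun i hi =>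
    div_le_one_of_le₀ (Nat.cast_le.mpr ((mem_range.mp hi).le.trans hnN)) hNpos.le
  have hbase : 0 ≤ 1 - α / N := sub_nonneg.mpr ((div_le_one hNpos).mpr hαN)
  have hprod : ∏ i ∈ range n, (1 - (i : ℝ) / N) ≤ exp (-∑ i ∈ range n, (i : ℝ) / N) :=
    prod_one_sub_le_exp_neg_sum _ hfrac_le_one
  have hpow : (1 - α / N) ^ (N - n) ≤ exp (-((N - n : ℕ) * (α / N))) := by
    rw [neg_mul_eq_mul_neg, exp_nat_mul]
    exact pow_le_pow_left₀ hbase (one_sub_le_exp_neg _) _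
  have hexponent : -∑ i ∈ range n, (i : ℝ) / N + -((N - n : ℕ) * (α / N)) ≤
      (α + 1 / 2) ^ 2 / (2 * N) - α := by
    rw [← sum_div, Nat.cast_sub hnN]
    have := mul_sub_sq_div_two_le_sum_range α n
    field_simp
    linarith
  calc (N.choose n : ℝ) * (α / N) ^ n * (1 - α / N) ^ (N - n)
      = α ^ n / n ! * ((∏ i ∈ range n, (1 - (i : ℝ) / N)) * (1 - α / N) ^ (N - n)) := by
        rw [Nat.cast_choose_mul_div_pow hN, mul_assoc]
    _ ≤ α ^ n / n ! * (exp (-∑ i ∈ range n, (i : ℝ) / N) * exp (-((N - n : ℕ) * (α / N)))) := by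
        gcongr
    _ ≤ α ^ n / n ! * exp ((α + 1 / 2) ^ 2 / (2 * N) - α) := by
        rw [← exp_add]
        gcongr
    _ = exp ((α + 1 / 2) ^ 2 / (2 * N)) * (exp (-α) * α ^ n / n !) := by
        rw [sub_eq_add_neg, exp_add]
        ring

theorem binomial_dominated_by_poisson (α : ℝ) (hα : 0 < α) :
    ∃ N₀ : ℕ, ∀ N : ℕ, N₀ ≤ N → ∀ n : ℕ, α < n → n ≤ N →
      (N.choose n : ℝ) * (α / N) ^ n * (1 - α / N) ^ (N - n) ≤
        4 * Real.exp (-α) * α ^ n / n.factorial := by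
  refine ⟨⌈(α + 1 / 2) ^ 2⌉₊, fun N hN n hαn hnN => ?_⟩
  have hαN : α ≤ N := hαn.le.trans (Nat.cast_le.mpr hnN)
  have hNpos : 0 < N := (Nat.cast_pos.mp (hα.trans hαn)).trans_le hnN
  have hfactor : exp ((α + 1 / 2) ^ 2 / (2 * N)) ≤ 4 :=
    calc exp ((α + 1 / 2) ^ 2 / (2 * N)) ≤ exp 1 := by
          rw [exp_le_exp, div_le_one (by positivity)]
          linarith [Nat.ceil_le.mp hN]
      _ ≤ 4 := by linarith [exp_one_lt_three]
  calc (N.choose n : ℝ) * (α / N) ^ n * (1 - α / N) ^ (N - n)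
      ≤ exp ((α + 1 / 2) ^ 2 / (2 * N)) * (exp (-α) * α ^ n / n !) :=
        binomial_le_exp_mul_poisson hα.le hNpos.ne' hnN hαN
    _ ≤ 4 * (exp (-α) * α ^ n / n !) := by gcongr
    _ = 4 * Real.exp (-α) * α ^ n / n.factorial := by ring
end

section
/- Let $\mu, \rho > 0$, $\eta_0 > 0$, let $\gamma(v) = e^{-\pi v^2}$, and let $g_0$ be a probability density on $\mathbb{R}$. Define $\eta(t) = e^{-\rho t}\eta_0 + (1-e^{-\rho t})\mu/\rho$ and $g(v,t) = \frac{1}{\eta(t)}\big(e^{-\rho t}\eta_0 g_0(v) + (1-e^{-\rho t})\tfrac{\mu}{\rho}\gamma(v)\big)$. Then $f_N(\mathbf{v}_N,t) = e^{-\eta(t)}\frac{\eta(t)^N}{N!}\prod_{i=1}^N g(v_i,t)$ satisfies, for every $N$, the master equation $\partial_t f_N = \rho\big((N+1)\int f_{N+1}(\mathbf{v}_N,w,t)\,dw - N f_N\big) + \mu\big(\frac{1}{N}\sum_{i=1}^N \gamma(v_i) f_{N-1}(\mathbf{v}_N^i,t) - f_N\big)$, where $\mathbf{v}_N^i$ omits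 $v_i$. -/
/-!
Write `a = η g` for the unnormalised one-particle density, so that `f_N = e^{-η} ∏ a(v_i) / N!`.
Both in/out operators act linearly on `a`, which relaxes as `∂ₜ a = -ρ a + μ γ`, and hence its
mass relaxes as `η' = μ - ρ η`. Differentiating the product, the `-ρ a` terms give the loss
`-ρ N f_N`, the `μ γ` terms give the gain of the in-operator, and the factor `e^{-η}` contributes
`(ρ η - μ) f_N`; since `∫ a = η`, the term `ρ η f_N` is exactly the gain `ρ (N + 1) ∫ f_{N+1}` of
the out-operator.
-/

open MeasureTheory

/-- The density on `ℝ^N` of a Poisson point process with intensity `a` of total mass `η`. -/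
noncomputable def poissonDensity (η : ℝ) (a : ℝ → ℝ) (N : ℕ) (v : Fin N → ℝ) : ℝ :=
  Real.exp (-η) / N.factorial * ∏ i, a (v i)

section PoissonDensity

variable (η : ℝ) (a : ℝ → ℝ) {N : ℕ}

theorem poissonDensity_mul_left (g : ℝ → ℝ) (v : Fin N → ℝ) :
    poissonDensity η (fun w => η * g w) N v =
      Real.exp (-η) * η ^ N / N.factorial * ∏ i, g (v i) := by
  rw [poissonDensity, Finset.prod_mul_distrib, Finset.prod_const, Finset.card_univ,
    Fintype.card_fin]
  ring

theorem mul_poissonDensity_succAbove (v : Fin (N + 1) → ℝ) (i : Fin (N + 1)) :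
    a (v i) * poissonDensity η a N (fun j => v (i.succAbove j)) =
      (N + 1) * poissonDensity η a (N + 1) v := by
  have hN : (N + 1 : ℝ) ≠ 0 := N.cast_add_one_ne_zero
  rw [poissonDensity, poissonDensity, Fin.prod_univ_succAbove _ i, Nat.factorial_succ]
  push_cast
  field_simp

theorem integral_poissonDensity_snoc (v : Fin N → ℝ) :
    ∫ w, poissonDensity η a (N + 1) (Fin.snoc v w) =
      (∫ w, a w) / (N + 1) * poissonDensity η a N v := by
  have hsnoc (w : ℝ) : poissonDensity η a (N + 1) (Fin.snoc v w) =
      a w * poissonDensity η a N v / (N + 1) := by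
    have := mul_poissonDensity_succAbove η a (Fin.snoc v w) (Fin.last N)
    simp only [Fin.succAbove_last, Fin.snoc_castSucc, Fin.snoc_last] at this
    rw [this]
    field_simp
  simp_rw [hsnoc, integral_div, integral_mul_const]
  ring

end PoissonDensity

section Evolution

variable {η : ℝ → ℝ} {a : ℝ → ℝ → ℝ} {t : ℝ} {N : ℕ} (v : Fin (N + 1) → ℝ)

theorem hasDerivAt_poissonDensity {η' : ℝ} {a' : ℝ → ℝ}
    (hη : HasDerivAt η η' t) (ha : ∀ i, HasDerivAt (a (v i)) (a' (v i)) t) :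
    HasDerivAt (fun s => poissonDensity (η s) (a · s) (N + 1) v)
      (-η' * poissonDensity (η t) (a · t) (N + 1) v +
        (∑ i, a' (v i) * poissonDensity (η t) (a · t) N (fun j => v (i.succAbove j))) /
          (N + 1)) t := by
  have hprod := HasDerivAt.fun_finsetProd (u := Finset.univ) fun i _ => ha i
  have herase (i : Fin (N + 1)) :
      ∏ j ∈ Finset.univ.erase i, a (v j) t = ∏ j, a (v (i.succAbove j)) t := by
    rw [Fin.univ_succAbove N i, Finset.erase_cons, Finset.prod_map, Fin.coe_succAboveEmb]
  have hN : (N + 1 : ℝ) ≠ 0 := N.cast_add_one_ne_zero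
  have hsum : ∑ i, a' (v i) * poissonDensity (η t) (a · t) N (fun j => v (i.succAbove j)) =
      Real.exp (-η t) / N.factorial * ∑ i, (∏ j ∈ Finset.univ.erase i, a (v j) t) • a' (v i) := by
    simp only [poissonDensity, herase, smul_eq_mul, Finset.mul_sum]
    exact Finset.sum_congr rfl fun i _ => by ring
  refine (((hη.neg.exp).div_const _).mul hprod).congr_deriv ?_
  rw [hsum, poissonDensity, Nat.factorial_succ, Pi.neg_apply]
  push_cast
  field_simp

theorem hasDerivAt_poissonDensity_thermostat {μ ρ : ℝ} (γ : ℝ → ℝ)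
    (hη : HasDerivAt η (μ - ρ * η t) t)
    (ha : ∀ i, HasDerivAt (a (v i)) (-ρ * a (v i) t + μ * γ (v i)) t) :
    HasDerivAt (fun s => poissonDensity (η s) (a · s) (N + 1) v)
      (ρ * (η t * poissonDensity (η t) (a · t) (N + 1) v -
          (N + 1) * poissonDensity (η t) (a · t) (N + 1) v) +
        μ * (1 / (N + 1) *
            ∑ i, γ (v i) * poissonDensity (η t) (a · t) N (fun j => v (i.succAbove j)) -
          poissonDensity (η t) (a · t) (N + 1) v)) t := by
  refine (hasDerivAt_poissonDensity (a' := fun w => -ρ * a w t + μ * γ w) v hη ha).congr_deriv ?_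
  have hloss : ∑ i, a (v i) t * poissonDensity (η t) (a · t) N (fun j => v (i.succAbove j)) =
      (N + 1) * ((N + 1) * poissonDensity (η t) (a · t) (N + 1) v) :=
    (Finset.sum_congr rfl fun i _ => mul_poissonDensity_succAbove (η t) (a · t) v i).trans
      (by simp)
  have hsplit : ∑ i, (-ρ * a (v i) t + μ * γ (v i)) *
        poissonDensity (η t) (a · t) N (fun j => v (i.succAbove j)) =
      -ρ * ∑ i, a (v i) t * poissonDensity (η t) (a · t) N (fun j => v (i.succAbove j)) +
        μ * ∑ i, γ (v i) * poissonDensity (η t) (a · t) N (fun j => v (i.succAbove j)) := by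
    simp only [add_mul, Finset.sum_add_distrib, Finset.mul_sum, mul_assoc]
  rw [hsplit, hloss]
  have hN : (N + 1 : ℝ) ≠ 0 := N.cast_add_one_ne_zero
  field_simp
  ring

end Evolution

theorem hasDerivAt_relaxation (ρ c₀ c₁ t : ℝ) :
    HasDerivAt (fun s => Real.exp (-ρ * s) * c₀ + (1 - Real.exp (-ρ * s)) * c₁)
      (ρ * (c₁ - (Real.exp (-ρ * t) * c₀ + (1 - Real.exp (-ρ * t)) * c₁))) t := by
  have hexp : HasDerivAt (fun s => Real.exp (-ρ * s)) (Real.exp (-ρ * t) * -ρ) t :=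
    ((hasDerivAt_id t).const_mul (-ρ)).exp.congr_deriv (by simp)
  refine ((hexp.mul_const c₀).add ((hexp.const_sub 1).mul_const c₁)).congr_deriv ?_
  ring

theorem relaxation_pos {ρ c₀ c₁ t : ℝ} (hρ : 0 ≤ ρ) (hc₀ : 0 < c₀) (hc₁ : 0 ≤ c₁)
    (ht : 0 ≤ t) :
    0 < Real.exp (-ρ * t) * c₀ + (1 - Real.exp (-ρ * t)) * c₁ := by
  have hexp : Real.exp (-ρ * t) ≤ 1 := Real.exp_le_one_iff.mpr (by nlinarith)
  positivity

theorem integral_exp_neg_pi_mul_sq : ∫ v : ℝ, Real.exp (-Real.pi * v ^ 2) = 1 := by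
  rw [integral_gaussian, div_self Real.pi_ne_zero, Real.sqrt_one]

theorem thermostat_preserves_product_states_general (μ ρ : ℝ) (hμ : 0 < μ) (hρ : 0 < ρ)
    (η₀ : ℝ) (hη₀ : 0 < η₀)
    (γ : ℝ → ℝ) (hγ : ∀ v, γ v = Real.exp (-Real.pi * v ^ 2))
    (g₀ : ℝ → ℝ) (hg₀int : Integrable g₀)
    (hg₀norm : (∫ v, g₀ v) = 1)
    (η : ℝ → ℝ)
    (hη : ∀ t, η t = Real.exp (-ρ * t) * η₀ + (1 - Real.exp (-ρ * t)) * (μ / ρ))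
    (g : ℝ → ℝ → ℝ)
    (hg : ∀ v t, g v t =
      (Real.exp (-ρ * t) * η₀ * g₀ v + (1 - Real.exp (-ρ * t)) * (μ / ρ) * γ v) / η t)
    (f : (N : ℕ) → (Fin N → ℝ) → ℝ → ℝ)
    (hf : ∀ (N : ℕ) (v : Fin N → ℝ) (t : ℝ),
      f N v t = Real.exp (-η t) * η t ^ N / N.factorial * ∏ i, g (v i) t) :
    ∀ (N : ℕ) (v : Fin (N + 1) → ℝ) (t : ℝ), 0 ≤ t →
      HasDerivAt (fun s => f (N + 1) v s)
        (ρ * (((N : ℝ) + 2) * (∫ w : ℝ, f (N + 2) (Fin.snoc v w) t) -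
            ((N : ℝ) + 1) * f (N + 1) v t) +
          μ * ((1 / ((N : ℝ) + 1)) *
              (∑ i, γ (v i) * f N (fun j => v (i.succAbove j)) t) -
            f (N + 1) v t)) t := by
  intro N v t ht
  set a : ℝ → ℝ → ℝ := fun w s =>
    Real.exp (-ρ * s) * η₀ * g₀ w + (1 - Real.exp (-ρ * s)) * (μ / ρ) * γ w
  have hη_deriv : HasDerivAt η (μ - ρ * η t) t := by
    have h := hasDerivAt_relaxation ρ η₀ (μ / ρ) t
    rw [← funext hη, ← hη t] at h
    exact h.congr_deriv (by field_simp)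
  have ha_deriv (w : ℝ) : HasDerivAt (a w) (-ρ * a w t + μ * γ w) t := by
    convert hasDerivAt_relaxation ρ (η₀ * g₀ w) (μ / ρ * γ w) t using 1
    · simp only [a, mul_assoc]
    · simp only [a]
      field_simp
      ring
  have hf_eq (s : ℝ) (hs : η s ≠ 0) (M : ℕ) (u : Fin M → ℝ) :
      f M u s = poissonDensity (η s) (a · s) M u := by
    rw [hf, ← poissonDensity_mul_left (η s) (g · s) u]
    congr 1
    funext w
    rw [hg, mul_div_cancel₀ _ hs]
  have hηt : 0 < η t := hη t ▸ relaxation_pos hρ.le hη₀ (div_pos hμ hρ).le ht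
  have hγ_int : Integrable γ := funext hγ ▸ integrable_exp_neg_mul_sq Real.pi_pos
  have ha_mass : ∫ w, a w t = η t := by
    rw [integral_add (hg₀int.const_mul _) (hγ_int.const_mul _), integral_const_mul,
      integral_const_mul, hg₀norm, funext hγ, integral_exp_neg_pi_mul_sq, hη]
    ring
  have hf_near : (fun s => f (N + 1) v s) =ᶠ[nhds t]
      fun s => poissonDensity (η s) (a · s) (N + 1) v :=
    (hη_deriv.continuousAt.eventually (eventually_gt_nhds hηt)).mono
      fun s hs => hf_eq s hs.ne' _ _
  have hthermostat :=
    hasDerivAt_poissonDensity_thermostat v γ hη_deriv fun i => ha_deriv (v i)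
  refine (hthermostat.congr_of_eventuallyEq hf_near).congr_deriv ?_
  simp only [hf_eq t hηt.ne', integral_poissonDensity_snoc, ha_mass]
  push_cast
  field_simp
  ring

theorem thermostat_preserves_product_states (μ ρ : ℝ) (hμ : 0 < μ) (hρ : 0 < ρ)
    (η₀ : ℝ) (hη₀ : 0 < η₀)
    (γ : ℝ → ℝ) (hγ : ∀ v, γ v = Real.exp (-Real.pi * v ^ 2))
    (g₀ : ℝ → ℝ) (hg₀pos : ∀ v, 0 ≤ g₀ v) (hg₀int : Integrable g₀)
    (hg₀norm : (∫ v, g₀ v) = 1)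
    (η : ℝ → ℝ)
    (hη : ∀ t, η t = Real.exp (-ρ * t) * η₀ + (1 - Real.exp (-ρ * t)) * (μ / ρ))
    (g : ℝ → ℝ → ℝ)
    (hg : ∀ v t, g v t =
      (Real.exp (-ρ * t) * η₀ * g₀ v + (1 - Real.exp (-ρ * t)) * (μ / ρ) * γ v) / η t)
    (f : (N : ℕ) → (Fin N → ℝ) → ℝ → ℝ)
    (hf : ∀ (N : ℕ) (v : Fin N → ℝ) (t : ℝ),
      f N v t = Real.exp (-η t) * η t ^ N / N.factorial * ∏ i, g (v i) t) :
    ∀ (N : ℕ) (v : Fin (N + 1) → ℝ) (t : ℝ), 0 ≤ t →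
      HasDerivAt (fun s => f (N + 1) v s)
        (ρ * (((N : ℝ) + 2) * (∫ w : ℝ, f (N + 2) (Fin.snoc v w) t) -
            ((N : ℝ) + 1) * f (N + 1) v t) +
          μ * ((1 / ((N : ℝ) + 1)) *
              (∑ i, γ (v i) * f N (fun j => v (i.succAbove j)) t) -
            f (N + 1) v t)) t :=
  thermostat_preserves_product_states_general μ ρ hμ hρ η₀ hη₀ γ hγ g₀ hg₀int hg₀norm η hη g hg f hf
end
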